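/- A permutation σ avoiding 231 is uniquely determined by its set of (descent top, descent bottom) pairs: if σ, τ ∈ S_n(231) satisfy {(σ(i), σ(i+1)) : σ(i) > σ(i+1)} = {(τ(i), τ(i+1)) : τ(i) > τ(i+1)}, then σ = τ. -/
import Mathlib


namespace MahonianStats

open Finset

/-- The value sequence of a permutation of `{1,…,n}`: position `i` (0-indexed)
carries the value `σ(i+1) ∈ {1,…,n}`; positions `≥ n` carry the junk value `0`. -/
def pf {n : ℕ} (σ : Equiv.Perm (Fin n)) : ℕ → ℕ :=
  fun i => if h : i < n then ((σ ⟨i, h⟩ : Fin n) : ℕ) + 1 else 0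

/-- The value sequence of a list (junk value `0` out of range). -/
def lf (l : List ℕ) : ℕ → ℕ := fun i => l.getD i 0

/-- Descent positions (0-indexed). -/
def desSet (n : ℕ) (f : ℕ → ℕ) : Finset ℕ :=
  (range (n - 1)).filter fun i => f (i + 1) < f i

def des (n : ℕ) (f : ℕ → ℕ) : ℕ := (desSet n f).card

/-- Major index: sum of (1-indexed) descent positions. -/
def maj (n : ℕ) (f : ℕ → ℕ) : ℕ := ∑ i ∈ desSet n f, (i + 1)

/-- Occurrences of the vincular pattern (1-32). -/
def p1_32 (n : ℕ) (f : ℕ → ℕ) : ℕ :=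
  ((range n ×ˢ range n).filter fun p =>
    p.1 < p.2 ∧ p.2 + 1 < n ∧ f p.1 < f (p.2 + 1) ∧ f (p.2 + 1) < f p.2).card

/-- Occurrences of the vincular pattern (31-2). -/
def p31_2 (n : ℕ) (f : ℕ → ℕ) : ℕ :=
  ((range n ×ˢ range n).filter fun p =>
    p.1 + 1 < p.2 ∧ f (p.1 + 1) < f p.2 ∧ f p.2 < f p.1).card

/-- Occurrences of the vincular pattern (32-1). -/
def p32_1 (n : ℕ) (f : ℕ → ℕ) : ℕ :=
  ((range n ×ˢ range n).filter fun p =>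
    p.1 + 1 < p.2 ∧ f p.2 < f (p.1 + 1) ∧ f (p.1 + 1) < f p.1).card

/-- Occurrences of the vincular pattern (21-3). -/
def p21_3 (n : ℕ) (f : ℕ → ℕ) : ℕ :=
  ((range n ×ˢ range n).filter fun p =>
    p.1 + 1 < p.2 ∧ f (p.1 + 1) < f p.1 ∧ f p.1 < f p.2).card

/-- Occurrences of the vincular pattern (3-21). -/
def p3_21 (n : ℕ) (f : ℕ → ℕ) : ℕ :=
  ((range n ×ˢ range n).filter fun p =>
    p.1 < p.2 ∧ p.2 + 1 < n ∧ f (p.2 + 1) < f p.2 ∧ f p.2 < f p.1).card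

/-- Occurrences of the vincular pattern (13-2). -/
def p13_2 (n : ℕ) (f : ℕ → ℕ) : ℕ :=
  ((range n ×ˢ range n).filter fun p =>
    p.1 + 1 < p.2 ∧ f p.1 < f p.2 ∧ f p.2 < f (p.1 + 1)).card

/-- Occurrences of the vincular pattern (2-13). -/
def p2_13 (n : ℕ) (f : ℕ → ℕ) : ℕ :=
  ((range n ×ˢ range n).filter fun p =>
    p.1 < p.2 ∧ p.2 + 1 < n ∧ f p.2 < f p.1 ∧ f p.1 < f (p.2 + 1)).card

/-- Occurrences of the vincular pattern (2-31). -/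
def p2_31 (n : ℕ) (f : ℕ → ℕ) : ℕ :=
  ((range n ×ˢ range n).filter fun p =>
    p.1 < p.2 ∧ p.2 + 1 < n ∧ f (p.2 + 1) < f p.1 ∧ f p.1 < f p.2).card

/-- Number of inversions. -/
def invp (n : ℕ) (f : ℕ → ℕ) : ℕ :=
  ((range n ×ˢ range n).filter fun p => p.1 < p.2 ∧ f p.2 < f p.1).card

def mak (n : ℕ) (f : ℕ → ℕ) : ℕ := p1_32 n f + p31_2 n f + p32_1 n f + des n f

def mad (n : ℕ) (f : ℕ → ℕ) : ℕ := 2 * p2_31 n f + p31_2 n f + des n f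

def Av123 (n : ℕ) (f : ℕ → ℕ) : Prop :=
  ¬ ∃ i j k, i < j ∧ j < k ∧ k < n ∧ f i < f j ∧ f j < f k
def Av132 (n : ℕ) (f : ℕ → ℕ) : Prop :=
  ¬ ∃ i j k, i < j ∧ j < k ∧ k < n ∧ f i < f k ∧ f k < f j
def Av213 (n : ℕ) (f : ℕ → ℕ) : Prop :=
  ¬ ∃ i j k, i < j ∧ j < k ∧ k < n ∧ f j < f i ∧ f i < f k
def Av231 (n : ℕ) (f : ℕ → ℕ) : Prop :=
  ¬ ∃ i j k, i < j ∧ j < k ∧ k < n ∧ f k < f i ∧ f i < f j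
def Av312 (n : ℕ) (f : ℕ → ℕ) : Prop :=
  ¬ ∃ i j k, i < j ∧ j < k ∧ k < n ∧ f j < f k ∧ f k < f i
def Av321 (n : ℕ) (f : ℕ → ℕ) : Prop :=
  ¬ ∃ i j k, i < j ∧ j < k ∧ k < n ∧ f k < f j ∧ f j < f i

/-- The set of (descent top, descent bottom) pairs. -/
def DPairs (n : ℕ) (f : ℕ → ℕ) : Finset (ℕ × ℕ) :=
  (desSet n f).image fun i => (f i, f (i + 1))

lemma pf_lt {n : ℕ} (σ : Equiv.Perm (Fin n)) {i : ℕ} (hi : i < n) :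
    pf σ i = ((σ ⟨i, hi⟩ : Fin n) : ℕ) + 1 := by simp [pf, hi]

lemma pf_inj {n : ℕ} (σ : Equiv.Perm (Fin n)) {i j : ℕ} (hi : i < n) (hj : j < n)
    (h : pf σ i = pf σ j) : i = j := by
  rw [pf_lt σ hi, pf_lt σ hj] at h
  have h2 : (⟨i, hi⟩ : Fin n) = ⟨j, hj⟩ := σ.injective (Fin.ext (by omega))
  exact congrArg Fin.val h2

lemma stmt7_step (n : ℕ) (σ τ : Equiv.Perm (Fin n))
    (hσ : Av231 n (pf σ))
    (h : DPairs n (pf σ) = DPairs n (pf τ))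
    (i : ℕ) (hi : i < n)
    (hpre : ∀ j < i, pf σ j = pf τ j)
    (hab : pf σ i < pf τ i) : False := by
  set f := pf σ with hf
  set g := pf τ with hg
  set a := f i with ha
  -- the value `a` appears in `g` at some position `l < n`
  obtain ⟨l, hl, hgl⟩ : ∃ l, l < n ∧ g l = a := by
    refine ⟨(τ.symm (σ ⟨i, hi⟩) : ℕ), (τ.symm _).isLt, ?_⟩
    rw [hg, pf_lt τ (τ.symm _).isLt, ha, hf, pf_lt σ hi]
    simp
  have hli : i < l := by
    rcases lt_trichotomy l i with h' | h' | h'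
    · have h1 := hpre l h'
      have : l = i := pf_inj σ hl hi (show f l = f i by rw [h1, hgl])
      omega
    · subst h'; omega
    · exact h'
  -- find the first place `m ≥ i` where `g` drops to a value `≤ a`
  have hex : ∃ j, i ≤ j ∧ j < l ∧ g (j + 1) ≤ a :=
    ⟨l - 1, by omega, by omega, by rw [show l - 1 + 1 = l by omega, hgl]⟩
  set m := Nat.find hex with hm
  obtain ⟨hmi, hml, hgm1⟩ := Nat.find_spec hex
  have habove : ∀ j, i ≤ j → j ≤ m → a < g j := by
    intro j hj
    induction j, hj using Nat.le_induction with
    | base => intro _; exact hab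
    | succ j hj ih =>
      intro hjm
      have h1 : a < g j := ih (by omega)
      have h2 := Nat.find_min hex (show j < m by omega)
      push_neg at h2
      have := h2 hj (by omega)
      omega
  have hdg : m ∈ desSet n g := by
    simp only [desSet, mem_filter, mem_range]
    exact ⟨by omega, lt_of_le_of_lt hgm1 (habove m hmi le_rfl)⟩
  have hpair : (g m, g (m + 1)) ∈ DPairs n f := by
    rw [h]
    exact Finset.mem_image_of_mem _ hdg
  obtain ⟨t, ht, hteq⟩ := Finset.mem_image.mp hpair
  have htn : t < n - 1 := by
    simp only [desSet, mem_filter, mem_range] at ht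
    exact ht.1
  have hft : f t = g m := congrArg Prod.fst hteq
  have hft1 : f (t + 1) = g (m + 1) := congrArg Prod.snd hteq
  have hti : i < t := by
    rcases lt_trichotomy t i with h' | h' | h'
    · have h1 : g t = g m := by rw [← hpre t h', hft]
      have : t = m := pf_inj τ (by omega) (by omega) h1
      omega
    · subst h'
      have := habove m hmi le_rfl
      rw [← hft] at this
      omega
    · exact h'
  have hBa : f (t + 1) < a := by
    rcases lt_or_eq_of_le (hft1 ▸ hgm1) with h' | h'
    · exact h'
    · have : t + 1 = i := pf_inj σ (by omega) hi (show f (t+1) = f i by rw [h', ha])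
      omega
  exact hσ ⟨i, t, t + 1, hti, by omega, by omega, hBa,
    by rw [hft]; exact habove m hmi le_rfl⟩

/-- a 231-avoiding permutation is uniquely determined by its set of
(descent top, descent bottom) pairs. -/
theorem stmt7 (n : ℕ) (σ τ : Equiv.Perm (Fin n))
    (hσ : Av231 n (pf σ)) (hτ : Av231 n (pf τ))
    (h : DPairs n (pf σ) = DPairs n (pf τ)) : σ = τ := by
  have key : ∀ i, i < n → pf σ i = pf τ i := by
    intro i
    induction i using Nat.strong_induction_on with
    | _ i ih =>
      intro hi
      have hpre : ∀ j < i, pf σ j = pf τ j := fun j hj => ih j hj (by omega)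
      rcases lt_trichotomy (pf σ i) (pf τ i) with h' | h' | h'
      · exact (stmt7_step n σ τ hσ h i hi hpre h').elim
      · exact h'
      · exact (stmt7_step n τ σ hτ h.symm i hi
          (fun j hj => (hpre j hj).symm) h').elim
  apply Equiv.ext
  intro x
  have hx := key x.val x.isLt
  rw [pf_lt σ x.isLt, pf_lt τ x.isLt] at hx
  have : σ ⟨x.val, x.isLt⟩ = τ ⟨x.val, x.isLt⟩ := Fin.ext (by omega)
  simpa using this

end MahonianStats
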